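/- arXiv:2309.17357 — 2 statements merged into one kernel-verified Lean document; each statement's English description precedes it below -/
import Mathlib

section
/- (Proposition 2, existence.) Let μ be an absolutely continuous Borel probability measure on Ω with μ(∂Ω) = 0 and let τ > 0. Then the problem of minimizing (T, F) ↦ 𝓛(F, T_♯μ) + (1/(2τ)) ∫_Ω ‖T(x) − x‖² dμ(x) over Borel measurable maps T : Ω → Ω and F ∈ 𝓕 admits a minimizer (T*, F*) such that T* is an optimal transport map from μ to T*_♯μ, i.e. ∫_Ω ‖T*(x) − x‖² dμ(x) = W2²(μ, T*_♯μ). -/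
/-!
For fixed `F` the problem in `T` decouples pointwise: with `φ = τ L F + ‖·‖² / 2`,
`L F y + ‖y - x‖² / (2τ) = (‖x‖² / 2 - (⟪x, y⟫ - φ y)) / τ`, so its infimum over `y ∈ Ω` is the
Moreau envelope of `L F`, expressed through the convex conjugate `φ*`. Being Lipschitz, `φ*` is
differentiable `μ`-a.e. (Rademacher and `μ ≪ volume`), and there `∇φ*(x)` is the maximizer of
`⟪x, ·⟫ - φ`; this yields a measurable optimal `T_F`. The integrated envelope is continuous in `F`,
so it is minimized at some `F*` of the compact `𝓕`, and `(T_{F*}, F*)` is a minimizer.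
Finally `⟪x, y⟫ ≤ φ*(x) + φ(y)`, with equality on the graph of `T_{F*}`, so integrating
`‖x - y‖² ≥ ‖x‖² - 2 φ*(x) + ‖y‖² - 2 φ(y)` against any coupling of `μ` and `T_{F*} ♯ μ` shows
that no coupling is cheaper than `T_{F*}`.
-/

open MeasureTheory
open scoped RealInnerProductSpace

noncomputable def W2sq {d : ℕ} {Ω : Set (EuclideanSpace ℝ (Fin d))}
    (α β : Measure Ω) : ℝ :=
  sInf { c : ℝ | ∃ γ : Measure (Ω × Ω), IsProbabilityMeasure γ ∧
    γ.map Prod.fst = α ∧ γ.map Prod.snd = β ∧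
    c = ∫ p, ‖(p.1 : EuclideanSpace ℝ (Fin d)) - (p.2 : EuclideanSpace ℝ (Fin d))‖ ^ 2 ∂γ }

noncomputable def transportCost {d : ℕ} {Ω : Set (EuclideanSpace ℝ (Fin d))}
    (T : Ω → Ω) (μ : Measure Ω) : ℝ :=
  ∫ x, ‖(T x : EuclideanSpace ℝ (Fin d)) - (x : EuclideanSpace ℝ (Fin d))‖ ^ 2 ∂μ

section ConvexConjugate

variable {E : Type*} [NormedAddCommGroup E] [InnerProductSpace ℝ E] {Ω : Set E}

/-- The Legendre transform of `φ` extended by `+∞` outside `Ω`. -/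
noncomputable def convexConjugate (φ : Ω → ℝ) (x : E) : ℝ :=
  ⨆ y : Ω, ⟪x, (y : E)⟫ - φ y

section CompactDomain

variable [CompactSpace Ω] {φ : Ω → ℝ}

theorem inner_sub_le_convexConjugate (hφ : Continuous φ) (x : E) (y : Ω) :
    ⟪x, (y : E)⟫ - φ y ≤ convexConjugate φ x :=
  le_ciSup (isCompact_range (f := fun y : Ω => ⟪x, (y : E)⟫ - φ y) (by fun_prop)).bddAbove y

theorem exists_convexConjugate_eq [Nonempty Ω] (hφ : Continuous φ) (x : E) :
    ∃ y : Ω, convexConjugate φ x = ⟪x, (y : E)⟫ - φ y := by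
  obtain ⟨y, -, hy⟩ := isCompact_univ.exists_isMaxOn Set.univ_nonempty
    (show Continuous fun y : Ω => ⟪x, (y : E)⟫ - φ y by fun_prop).continuousOn
  exact ⟨y, le_antisymm (ciSup_le fun z => hy (Set.mem_univ z))
    (inner_sub_le_convexConjugate hφ x y)⟩

theorem continuous_convexConjugate_uncurry {P : Type*} [TopologicalSpace P] {φ : P → Ω → ℝ}
    (hφ : Continuous ↿φ) : Continuous fun q : P × E => convexConjugate (φ q.1) q.2 := by
  have := isCompact_univ.continuous_sSup
    (f := fun (q : P × E) (y : Ω) => ⟪q.2, (y : E)⟫ - φ q.1 y) (by fun_prop)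
  simp only [Set.image_univ] at this
  exact this

theorem continuous_convexConjugate (hφ : Continuous φ) : Continuous (convexConjugate φ) :=
  (continuous_convexConjugate_uncurry (φ := fun _ : Unit => φ) (hφ.comp continuous_snd)).comp
    (Continuous.prodMk_right ())

theorem lipschitzWith_convexConjugate [Nonempty Ω] (hφ : Continuous φ) {R : ℝ}
    (hR : ∀ y : Ω, ‖(y : E)‖ ≤ R) : LipschitzWith R.toNNReal (convexConjugate φ) :=
  LipschitzWith.of_le_add_mul' R fun x x' => ciSup_le fun y => calc
    ⟪x, (y : E)⟫ - φ y = (⟪x', (y : E)⟫ - φ y) + ⟪x - x', (y : E)⟫ := by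
      rw [inner_sub_left]; ring
    _ ≤ convexConjugate φ x' + R * dist x x' := by
      gcongr
      · exact inner_sub_le_convexConjugate hφ x' y
      · calc ⟪x - x', (y : E)⟫ ≤ ‖x - x'‖ * ‖(y : E)‖ := real_inner_le_norm _ _
          _ ≤ R * dist x x' := by
            rw [dist_eq_norm, mul_comm]; gcongr; exact hR y

end CompactDomain

theorem gradient_eq_of_forall_add_inner_le [CompleteSpace E] {f : E → ℝ} {x y : E}
    (hf : DifferentiableAt ℝ f x) (h : ∀ v, f x + ⟪y, v - x⟫ ≤ f v) : gradient f x = y := by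
  have hmin : IsLocalMin (fun v => f v - innerSL ℝ y v) x :=
    IsMinOn.isLocalMin (fun v _ => by
      have := h v
      simp only [innerSL_apply_apply, inner_sub_right, Set.mem_ofPred_eq] at this ⊢
      linarith) Filter.univ_mem
  have hderiv := hmin.hasFDerivAt_eq_zero (hf.hasFDerivAt.sub (innerSL ℝ y).hasFDerivAt)
  rw [gradient, sub_eq_zero.mp hderiv]
  exact (InnerProductSpace.toDual ℝ E).symm_apply_eq.mpr (by ext v; simp)

variable [CompleteSpace E]

theorem gradient_convexConjugate_eq [CompactSpace Ω] {φ : Ω → ℝ} (hφ : Continuous φ) {x : E}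
    {y : Ω} (hx : DifferentiableAt ℝ (convexConjugate φ) x)
    (hy : convexConjugate φ x = ⟪x, (y : E)⟫ - φ y) :
    gradient (convexConjugate φ) x = y :=
  gradient_eq_of_forall_add_inner_le hx fun v => by
    have := inner_sub_le_convexConjugate hφ v y
    rw [hy, inner_sub_right, real_inner_comm x, real_inner_comm v]
    linarith

open Classical in
/-- `y₀` is only a measurable fallback: where `convexConjugate φ` is differentiable its gradient is
the maximizer, which lies in `Ω` (`gradient_convexConjugate_eq`). -/
noncomputable def conjugateGradientMap (φ : Ω → ℝ) (y₀ : Ω) (x : Ω) : Ω :=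
  ⟨if gradient (convexConjugate φ) x ∈ Ω then gradient (convexConjugate φ) x else y₀,
    by split_ifs with h; exacts [h, y₀.2]⟩

theorem conjugateGradientMap_eq (φ : Ω → ℝ) (y₀ : Ω) {x y : Ω}
    (h : gradient (convexConjugate φ) x = y) : conjugateGradientMap φ y₀ x = y :=
  Subtype.ext (by simp [conjugateGradientMap, h])

variable [MeasurableSpace E] [BorelSpace E]

theorem measurable_conjugateGradientMap (hΩ : IsClosed Ω) (φ : Ω → ℝ) (y₀ : Ω) :
    Measurable (conjugateGradientMap φ y₀) := by
  have hgrad : Measurable fun x : Ω => gradient (convexConjugate φ) x :=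
    ((InnerProductSpace.toDual ℝ E).symm.continuous.measurable.comp
      (measurable_fderiv ℝ _)).comp measurable_subtype_coe
  exact (Measurable.ite (hΩ.measurableSet.preimage hgrad) hgrad measurable_const).subtype_mk

theorem ae_convexConjugate_eq_conjugateGradientMap [FiniteDimensional ℝ E] [CompactSpace Ω]
    {φ : Ω → ℝ} (hφ : Continuous φ) (y₀ : Ω) {ν : Measure E} [ν.IsAddHaarMeasure]
    {μ : Measure Ω} (hμ : μ.map ((↑) : Ω → E) ≪ ν) :
    ∀ᵐ x : Ω ∂μ, convexConjugate φ x =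
      ⟪(x : E), (conjugateGradientMap φ y₀ x : E)⟫ - φ (conjugateGradientMap φ y₀ x) := by
  have : Nonempty Ω := ⟨y₀⟩
  obtain ⟨R, hR⟩ := isBounded_iff_forall_norm_le.mp
    (isCompact_range (continuous_subtype_val (p := (· ∈ Ω)))).isBounded
  have hdiff := (lipschitzWith_convexConjugate hφ (R := R)
    fun y => hR _ (Set.mem_range_self y)).ae_differentiableAt (μ := ν)
  filter_upwards [ae_of_ae_map measurable_subtype_coe.aemeasurable (hμ.ae_le hdiff)] with x hx
  obtain ⟨y, hy⟩ := exists_convexConjugate_eq hφ (x : E)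
  rwa [conjugateGradientMap_eq φ y₀ (gradient_convexConjugate_eq hφ hx hy)]

end ConvexConjugate

theorem Continuous.integrable_of_compactSpace {X F : Type*} [TopologicalSpace X] [CompactSpace X]
    [MeasurableSpace X] [OpensMeasurableSpace X] [NormedAddCommGroup F] {f : X → F}
    (hf : Continuous f) (μ : Measure X) [IsFiniteMeasure μ] : Integrable f μ :=
  hf.integrable_of_hasCompactSupport (HasCompactSupport.of_compactSpace f)

theorem Continuous.integrable_comp_of_compactSpace {α X F : Type*} [MeasurableSpace α]
    [TopologicalSpace X] [CompactSpace X] [MeasurableSpace X] [OpensMeasurableSpace X]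
    [NormedAddCommGroup F] {g : X → F} (hg : Continuous g) {f : α → X} (hf : Measurable f)
    (μ : Measure α) [IsFiniteMeasure μ] : Integrable (fun a => g (f a)) μ :=
  (hg.integrable_of_compactSpace _).comp_measurable hf

section MoreauEnvelope

variable {E : Type*} [NormedAddCommGroup E] {Ω : Set E} {τ : ℝ} {ℓ : Ω → ℝ}

noncomputable def proxPotential (τ : ℝ) (ℓ : Ω → ℝ) (y : Ω) : ℝ :=
  τ * ℓ y + ‖(y : E)‖ ^ 2 / 2

theorem continuous_proxPotential (hℓ : Continuous ℓ) : Continuous (proxPotential τ ℓ) := by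
  unfold proxPotential
  fun_prop

variable [InnerProductSpace ℝ E]

/-- The Moreau envelope `x ↦ min_{y ∈ Ω} ℓ y + ‖y - x‖² / (2τ)`, written through the conjugate
(see `moreauEnvelope_le` and `moreauEnvelope_eq`). -/
noncomputable def moreauEnvelope (τ : ℝ) (ℓ : Ω → ℝ) (x : E) : ℝ :=
  (‖x‖ ^ 2 / 2 - convexConjugate (proxPotential τ ℓ) x) / τ

theorem add_norm_sub_sq_div_eq (hτ : τ ≠ 0) (ℓ : Ω → ℝ) (x : E) (y : Ω) :
    ℓ y + ‖(y : E) - x‖ ^ 2 / (2 * τ) =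
      (‖x‖ ^ 2 / 2 - (⟪x, (y : E)⟫ - proxPotential τ ℓ y)) / τ := by
  rw [norm_sub_sq_real, proxPotential, real_inner_comm]
  field_simp
  ring

theorem moreauEnvelope_eq (hτ : τ ≠ 0) {x : E} {y : Ω}
    (h : convexConjugate (proxPotential τ ℓ) x = ⟪x, (y : E)⟫ - proxPotential τ ℓ y) :
    moreauEnvelope τ ℓ x = ℓ y + ‖(y : E) - x‖ ^ 2 / (2 * τ) := by
  rw [add_norm_sub_sq_div_eq hτ, moreauEnvelope, h]

variable [CompactSpace Ω]

theorem continuous_moreauEnvelope (hℓ : Continuous ℓ) : Continuous (moreauEnvelope τ ℓ) :=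
  ((continuous_norm.pow 2).div_const 2 |>.sub
    (continuous_convexConjugate (continuous_proxPotential hℓ))).div_const τ

theorem moreauEnvelope_le (hτ : 0 < τ) (hℓ : Continuous ℓ) (x : E) (y : Ω) :
    moreauEnvelope τ ℓ x ≤ ℓ y + ‖(y : E) - x‖ ^ 2 / (2 * τ) := by
  rw [add_norm_sub_sq_div_eq hτ.ne', moreauEnvelope]
  gcongr
  exact inner_sub_le_convexConjugate (continuous_proxPotential hℓ) x y

theorem continuous_integral_moreauEnvelope [MeasurableSpace E] [OpensMeasurableSpace E]
    {P : Type*} [TopologicalSpace P] [FirstCountableTopology P] [LocallyCompactSpace P]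
    {ℓ : P → Ω → ℝ} (hℓ : Continuous ↿ℓ) (τ : ℝ) (μ : Measure Ω) [IsFiniteMeasure μ] :
    Continuous fun p => ∫ x, moreauEnvelope τ (ℓ p) x ∂μ := by
  have hconj := continuous_convexConjugate_uncurry
    (φ := fun p => proxPotential τ (ℓ p)) (by unfold proxPotential; fun_prop)
  have : Continuous fun q : P × Ω => moreauEnvelope τ (ℓ q.1) q.2 :=
    ((by fun_prop : Continuous fun q : P × Ω => ‖(q.2 : E)‖ ^ 2 / 2).sub
      (hconj.comp (continuous_fst.prodMk (continuous_subtype_val.comp continuous_snd)))).div_const τ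
  simpa using continuous_parametric_integral_of_continuous (μ := μ) this isCompact_univ

end MoreauEnvelope

section OptimalTransport

variable {d : ℕ} {Ω : Set (EuclideanSpace ℝ (Fin d))} {μ : Measure Ω} {T : Ω → Ω}

theorem exists_coupling_transportCost (μ : Measure Ω) [IsProbabilityMeasure μ] (hT : Measurable T) :
    ∃ γ : Measure (Ω × Ω), IsProbabilityMeasure γ ∧ γ.map Prod.fst = μ ∧
      γ.map Prod.snd = μ.map T ∧
      transportCost T μ = ∫ p, ‖(p.1 : EuclideanSpace ℝ (Fin d)) - p.2‖ ^ 2 ∂γ := by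
  have hgraph : Measurable fun x => (x, T x) := measurable_id.prodMk hT
  refine ⟨μ.map fun x => (x, T x), Measure.isProbabilityMeasure_map hgraph.aemeasurable, ?_, ?_, ?_⟩
  · rw [Measure.map_map measurable_fst hgraph]
    exact Measure.map_id
  · rw [Measure.map_map measurable_snd hgraph]
    rfl
  · rw [integral_map hgraph.aemeasurable (by fun_prop : Continuous fun p : Ω × Ω =>
      ‖(p.1 : EuclideanSpace ℝ (Fin d)) - p.2‖ ^ 2).aestronglyMeasurable, transportCost]
    simp_rw [norm_sub_rev]

theorem W2sq_le_transportCost [IsProbabilityMeasure μ] (hT : Measurable T) :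
    W2sq μ (μ.map T) ≤ transportCost T μ := by
  obtain ⟨γ, hγ, h₁, h₂, hcost⟩ := exists_coupling_transportCost μ hT
  refine csInf_le ⟨0, ?_⟩ ⟨γ, hγ, h₁, h₂, hcost⟩
  rintro _ ⟨γ', -, -, -, rfl⟩
  exact integral_nonneg fun p => by positivity

variable [CompactSpace Ω] {φ : Ω → ℝ}

theorem transportCost_le_of_ae_eq_convexConjugate [IsFiniteMeasure μ] (hφ : Continuous φ)
    (hT : Measurable T)
    (hTφ : ∀ᵐ x : Ω ∂μ, convexConjugate φ x = ⟪(x : EuclideanSpace ℝ (Fin d)), T x⟫ - φ (T x))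
    {γ : Measure (Ω × Ω)} [IsFiniteMeasure γ] (hγ₁ : γ.map Prod.fst = μ)
    (hγ₂ : γ.map Prod.snd = μ.map T) :
    transportCost T μ ≤ ∫ p, ‖(p.1 : EuclideanSpace ℝ (Fin d)) - p.2‖ ^ 2 ∂γ := by
  set a : Ω → ℝ := fun x => ‖(x : EuclideanSpace ℝ (Fin d))‖ ^ 2 - 2 * convexConjugate φ x
  set b : Ω → ℝ := fun y => ‖(y : EuclideanSpace ℝ (Fin d))‖ ^ 2 - 2 * φ y
  have ha : Continuous a := by have := continuous_convexConjugate hφ; fun_prop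
  have hb : Continuous b := by fun_prop
  have hbT : Integrable (fun x => b (T x)) μ := hb.integrable_comp_of_compactSpace hT μ
  have ha₁ : Integrable (fun p : Ω × Ω => a p.1) γ :=
    (ha.comp continuous_fst).integrable_of_compactSpace γ
  have hb₂ : Integrable (fun p : Ω × Ω => b p.2) γ :=
    (hb.comp continuous_snd).integrable_of_compactSpace γ
  calc transportCost T μ = ∫ x, (a x + b (T x)) ∂μ := by
        refine integral_congr_ae (hTφ.mono fun x hx => ?_)
        simp only [a, b, hx, norm_sub_rev, norm_sub_sq_real]
        ring
    _ = ∫ x, a x ∂(γ.map Prod.fst) + ∫ y, b y ∂(γ.map Prod.snd) := by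
        rw [hγ₁, hγ₂, integral_add (ha.integrable_of_compactSpace μ) hbT,
          integral_map hT.aemeasurable hb.aestronglyMeasurable]
    _ = ∫ p, (a p.1 + b p.2) ∂γ := by
        rw [integral_map measurable_fst.aemeasurable ha.aestronglyMeasurable,
          integral_map measurable_snd.aemeasurable hb.aestronglyMeasurable,
          integral_add ha₁ hb₂]
    _ ≤ ∫ p, ‖(p.1 : EuclideanSpace ℝ (Fin d)) - p.2‖ ^ 2 ∂γ := by
        refine integral_mono (ha₁.add hb₂) ((by fun_prop : Continuous fun p : Ω × Ω =>
          ‖(p.1 : EuclideanSpace ℝ (Fin d)) - p.2‖ ^ 2).integrable_of_compactSpace γ) fun p => ?_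
        have := inner_sub_le_convexConjugate hφ p.1 p.2
        simp only [a, b, norm_sub_sq_real]
        linarith

theorem transportCost_eq_W2sq_of_ae_eq_convexConjugate [IsProbabilityMeasure μ]
    (hφ : Continuous φ) (hT : Measurable T)
    (hTφ : ∀ᵐ x : Ω ∂μ, convexConjugate φ x = ⟪(x : EuclideanSpace ℝ (Fin d)), T x⟫ - φ (T x)) :
    transportCost T μ = W2sq μ (μ.map T) := by
  obtain ⟨γ, hγ, h₁, h₂, hcost⟩ := exists_coupling_transportCost μ hT
  refine le_antisymm (le_csInf ⟨_, γ, hγ, h₁, h₂, hcost⟩ ?_) (W2sq_le_transportCost hT)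
  rintro _ ⟨γ', hγ', h₁', h₂', rfl⟩
  exact transportCost_le_of_ae_eq_convexConjugate hφ hT hTφ h₁' h₂'

end OptimalTransport

section Objective

variable {d : ℕ} {Ω : Set (EuclideanSpace ℝ (Fin d))} [CompactSpace Ω] {μ : Measure Ω}
  [IsFiniteMeasure μ] {τ : ℝ} {ℓ : Ω → ℝ} {T : Ω → Ω}

theorem integral_map_add_transportCost_eq (hℓ : Continuous ℓ) (hT : Measurable T) (τ : ℝ) :
    ∫ y, ℓ y ∂(μ.map T) + 1 / (2 * τ) * transportCost T μ =
      ∫ x, (ℓ (T x) + ‖(T x : EuclideanSpace ℝ (Fin d)) - x‖ ^ 2 / (2 * τ)) ∂μ := by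
  have hcost : Integrable (fun x => ‖(T x : EuclideanSpace ℝ (Fin d)) - x‖ ^ 2) μ :=
    (by fun_prop : Continuous fun p : Ω × Ω => ‖(p.2 : EuclideanSpace ℝ (Fin d)) - p.1‖ ^ 2)
      |>.integrable_comp_of_compactSpace (measurable_id.prodMk hT) μ
  rw [integral_map hT.aemeasurable hℓ.aestronglyMeasurable, transportCost,
    integral_add (hℓ.integrable_comp_of_compactSpace hT μ) (hcost.div_const _), integral_div,
    one_div_mul_eq_div]

theorem integral_moreauEnvelope_le (hτ : 0 < τ) (hℓ : Continuous ℓ) (hT : Measurable T) :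
    ∫ x, moreauEnvelope τ ℓ x ∂μ ≤ ∫ y, ℓ y ∂(μ.map T) + 1 / (2 * τ) * transportCost T μ := by
  rw [integral_map_add_transportCost_eq hℓ hT]
  refine integral_mono
    (((continuous_moreauEnvelope hℓ).comp continuous_subtype_val).integrable_of_compactSpace μ)
    ?_ fun x => moreauEnvelope_le hτ hℓ x (T x)
  exact (by fun_prop : Continuous fun p : Ω × Ω =>
      ℓ p.2 + ‖(p.2 : EuclideanSpace ℝ (Fin d)) - p.1‖ ^ 2 / (2 * τ))
    |>.integrable_comp_of_compactSpace (measurable_id.prodMk hT) μ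

theorem integral_map_add_transportCost_eq_integral_moreauEnvelope (hτ : τ ≠ 0)
    (hℓ : Continuous ℓ) (hT : Measurable T)
    (hTℓ : ∀ᵐ x : Ω ∂μ, convexConjugate (proxPotential τ ℓ) x =
      ⟪(x : EuclideanSpace ℝ (Fin d)), T x⟫ - proxPotential τ ℓ (T x)) :
    ∫ y, ℓ y ∂(μ.map T) + 1 / (2 * τ) * transportCost T μ = ∫ x, moreauEnvelope τ ℓ x ∂μ := by
  rw [integral_map_add_transportCost_eq hℓ hT]
  exact integral_congr_ae (hTℓ.mono fun x hx => (moreauEnvelope_eq hτ hx).symm)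

end Objective

theorem stmt4_general {d : ℕ} (Ω : Set (EuclideanSpace ℝ (Fin d)))
    (hcomp : IsCompact Ω)
    (𝓕 : Type*) [MetricSpace 𝓕] [CompactSpace 𝓕] [Nonempty 𝓕]
    (L : 𝓕 → Ω → ℝ) (hLcont : Continuous fun p : 𝓕 × Ω => L p.1 p.2)
    (μ : Measure Ω) (hμ : IsProbabilityMeasure μ)
    (hac : μ.map (Subtype.val : Ω → EuclideanSpace ℝ (Fin d)) ≪ volume)
    (τ : ℝ) (hτ : 0 < τ) :
    ∃ (Tstar : Ω → Ω) (Fstar : 𝓕), Measurable Tstar ∧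
      (∀ (T : Ω → Ω), Measurable T → ∀ F : 𝓕,
        (∫ x, L Fstar x ∂(μ.map Tstar)) + (1 / (2 * τ)) * transportCost Tstar μ
          ≤ (∫ x, L F x ∂(μ.map T)) + (1 / (2 * τ)) * transportCost T μ) ∧
      transportCost Tstar μ = W2sq μ (μ.map Tstar) := by
  have : CompactSpace Ω := isCompact_iff_compactSpace.mp hcomp
  obtain ⟨y₀⟩ := nonempty_of_isProbabilityMeasure μ
  have hL (F : 𝓕) : Continuous (L F) := hLcont.comp (.prodMk_right F)
  obtain ⟨Fstar, -, hFstar⟩ := isCompact_univ.exists_isMinOn Set.univ_nonempty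
    (continuous_integral_moreauEnvelope hLcont τ μ).continuousOn
  set φ := proxPotential τ (L Fstar)
  have hφ : Continuous φ := continuous_proxPotential (hL Fstar)
  set Tstar := conjugateGradientMap φ y₀
  have hTstar : Measurable Tstar := measurable_conjugateGradientMap hcomp.isClosed φ y₀
  have hmax := ae_convexConjugate_eq_conjugateGradientMap hφ y₀ hac
  refine ⟨Tstar, Fstar, hTstar, fun T hT F => ?_,
    transportCost_eq_W2sq_of_ae_eq_convexConjugate hφ hTstar hmax⟩
  calc _ = ∫ x, moreauEnvelope τ (L Fstar) x ∂μ :=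
        integral_map_add_transportCost_eq_integral_moreauEnvelope hτ.ne' (hL Fstar) hTstar hmax
    _ ≤ ∫ x, moreauEnvelope τ (L F) x ∂μ := hFstar (Set.mem_univ F)
    _ ≤ _ := integral_moreauEnvelope_le hτ (hL F) hT

/-- Proposition 2 (existence): the regularized problem admits a minimizer whose transport
component is an optimal transport map from `μ` to its pushforward. -/
theorem stmt4 {d : ℕ} (hd : 1 ≤ d) (Ω : Set (EuclideanSpace ℝ (Fin d)))
    (hconv : Convex ℝ Ω) (hcomp : IsCompact Ω)
    (hfront : volume (frontier Ω) = 0)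
    (𝓕 : Type*) [MetricSpace 𝓕] [CompactSpace 𝓕] [Nonempty 𝓕]
    (L : 𝓕 → Ω → ℝ) (hLcont : Continuous fun p : 𝓕 × Ω => L p.1 p.2)
    (hLnonneg : ∀ F x, 0 ≤ L F x)
    (μ : Measure Ω) (hμ : IsProbabilityMeasure μ)
    (hac : μ.map (Subtype.val : Ω → EuclideanSpace ℝ (Fin d)) ≪ volume)
    (hμfront : μ.map (Subtype.val : Ω → EuclideanSpace ℝ (Fin d)) (frontier Ω) = 0)
    (τ : ℝ) (hτ : 0 < τ) :
    ∃ (Tstar : Ω → Ω) (Fstar : 𝓕), Measurable Tstar ∧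
      (∀ (T : Ω → Ω), Measurable T → ∀ F : 𝓕,
        (∫ x, L Fstar x ∂(μ.map Tstar)) + (1 / (2 * τ)) * transportCost Tstar μ
          ≤ (∫ x, L F x ∂(μ.map T)) + (1 / (2 * τ)) * transportCost T μ) ∧
      transportCost Tstar μ = W2sq μ (μ.map Tstar) :=
  stmt4_general Ω hcomp 𝓕 L hLcont μ hμ hac τ hτ
end

section
/- (Proposition 2, second part.) Let μ be an absolutely continuous Borel probability measure on Ω with μ(∂Ω) = 0 and let τ > 0. Then every minimizer (T, F) of (T, F) ↦ 𝓛(F, T_♯μ) + (1/(2τ)) ∫_Ω ‖T(x) − x‖² dμ(x) over Borel measurable maps T : Ω → Ω and F ∈ 𝓕 has the property that T is an optimal transport map from μ to T_♯μ, i.e. ∫_Ω ‖T(x) − x‖² dμ(x) = W2²(μ, T_♯μ). -/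
/-!
A minimiser `T` has to minimise the transport term among all measurable maps with the same
pushforward `ν = T_♯μ`, since the fitting term only sees `ν`. So it suffices that, for an
atomless `μ` on a compact set, transport maps are dense in cost among couplings of `μ` and `ν`.
Given a coupling `γ` and `δ > 0`, cut `Ω` into countably many Borel cells of radius `< δ`. On
each cell the atomless restriction of `μ` can be pushed onto the second marginal of the matching
piece of `γ` (through the cdf after a Borel embedding into `ℝ`, which makes it uniform on
`[0, 1]`). The glued map `T'` gives `(cell, T')` under `μ` the same law as `(cell of x, y)` under
`γ`, so both costs are within `2 δ diam Ω` of the common cost of reaching the cell centres.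
-/

open MeasureTheory

open ProbabilityTheory Set unitInterval

section Cdf

variable (P : Measure ℝ) [IsProbabilityMeasure P] [NullSingletonClass P]

lemma continuous_cdf : Continuous (cdf P) := by
  refine continuous_iff_continuousAt.2 fun a => ?_
  have hleft : Function.leftLim (cdf P) a = cdf P a := by
    have h := (cdf P).measure_singleton a
    rw [measure_cdf, measure_singleton, eq_comm, ENNReal.ofReal_eq_zero, sub_nonpos] at h
    exact le_antisymm ((monotone_cdf P).leftLim_le le_rfl) h
  rw [(monotone_cdf P).continuousAt_iff_leftLim_eq_rightLim, hleft,
    StieltjesFunction.rightLim_eq]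

lemma measure_cdf_le {t : ℝ} (ht0 : 0 ≤ t) (ht1 : t < 1) :
    P {x | cdf P x ≤ t} = ENNReal.ofReal t := by
  set S := {x | cdf P x ≤ t}
  rcases S.eq_empty_or_nonempty with hS | ⟨x₀, hx₀⟩
  · have : t ≤ 0 := ge_of_tendsto' (tendsto_cdf_atBot P) fun x =>
      (not_le.1 (eq_empty_iff_forall_notMem.1 hS x)).le
    simp [hS, le_antisymm this ht0]
  obtain ⟨b, hb⟩ := ((tendsto_cdf_atTop P).eventually (eventually_gt_nhds ht1)).exists
  obtain ⟨x, hx⟩ : t ∈ range (cdf P) :=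
    intermediate_value_univ x₀ b (continuous_cdf P) ⟨hx₀, hb.le⟩
  have hbdd : BddAbove S := ⟨b, fun y hy => not_lt.1 fun hby =>
    (hb.trans_le (monotone_cdf P hby.le)).not_ge hy⟩
  have hmem : sSup S ∈ S :=
    (isClosed_le (continuous_cdf P) continuous_const).csSup_mem ⟨x₀, hx₀⟩ hbdd
  have hS : S = Iic (sSup S) := Subset.antisymm (fun y hy => le_csSup hbdd hy)
    fun y hy => (monotone_cdf P hy).trans hmem
  have hx_le : x ≤ sSup S := le_csSup hbdd (show cdf P x ≤ t from hx.le)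
  have hsup : cdf P (sSup S) = t := le_antisymm hmem (hx ▸ monotone_cdf P hx_le)
  rw [hS, ← ofReal_cdf, hsup]

noncomputable def cdfUnitInterval (x : ℝ) : I := ⟨cdf P x, cdf_nonneg P x, cdf_le_one P x⟩

lemma continuous_cdfUnitInterval : Continuous (cdfUnitInterval P) :=
  (continuous_cdf P).subtype_mk _

lemma map_cdfUnitInterval : P.map (cdfUnitInterval P) = volume := by
  refine Measure.ext_of_Iic _ _ fun t => ?_
  rw [Measure.map_apply (continuous_cdfUnitInterval P).measurable measurableSet_Iic, volume_Iic]
  rcases t.2.2.lt_or_eq with ht | ht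
  · exact measure_cdf_le P t.2.1 ht
  · have : cdfUnitInterval P ⁻¹' Iic t = univ :=
      eq_univ_of_forall fun x => show cdf P x ≤ t from ht ▸ cdf_le_one P x
    rw [this, measure_univ, ht, ENNReal.ofReal_one]

end Cdf

lemma nullSingletonClass_map {α β : Type*} [MeasurableSpace α] [MeasurableSpace β]
    [MeasurableSingletonClass β] (μ : Measure α) [NullSingletonClass μ] {f : α → β}
    (hf : MeasurableEmbedding f) : NullSingletonClass (μ.map f) where
  measure_singleton y := by
    rw [hf.map_apply]
    exact (Set.subsingleton_singleton.preimage hf.injective).measure_zero μ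

lemma MeasureTheory.NullSingletonClass.of_map_absolutelyContinuous {α β : Type*}
    [MeasurableSpace α] [MeasurableSpace β] [MeasurableSingletonClass β] {μ : Measure α}
    {ν : Measure β} [NullSingletonClass ν] {f : α → β} (hf : Measurable f)
    (hμν : μ.map f ≪ ν) :
    NullSingletonClass μ where
  measure_singleton x := by
    refine measure_mono_null (singleton_subset_iff.2 rfl : {x} ⊆ f ⁻¹' {f x}) ?_
    rw [← Measure.map_apply hf (measurableSet_singleton _)]
    exact hμν (measure_singleton _)

section StandardBorel

variable {X Y : Type*} [MeasurableSpace X] [StandardBorelSpace X]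
  [MeasurableSpace Y] [StandardBorelSpace Y] [Nonempty Y]

lemma exists_measurable_map_eq_volume_unitInterval (μ : Measure X) [IsProbabilityMeasure μ]
    [NullSingletonClass μ] : ∃ g : X → I, Measurable g ∧ μ.map g = volume := by
  have he := measurableEmbedding_embeddingReal X
  have := Measure.isProbabilityMeasure_map (μ := μ) he.measurable.aemeasurable
  have := nullSingletonClass_map μ he
  have hcdf := (continuous_cdfUnitInterval (μ.map (embeddingReal X))).measurable
  refine ⟨_, hcdf.comp he.measurable, ?_⟩
  rw [← Measure.map_map hcdf he.measurable, map_cdfUnitInterval]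

lemma exists_measurable_map_eq_of_isProbabilityMeasure (μ : Measure X) (ν : Measure Y)
    [IsProbabilityMeasure μ] [NullSingletonClass μ] [IsProbabilityMeasure ν] :
    ∃ f : X → Y, Measurable f ∧ μ.map f = ν := by
  obtain ⟨g, hg, hμg⟩ := exists_measurable_map_eq_volume_unitInterval μ
  obtain ⟨h, hh, hνh⟩ := ν.exists_measurable_map_eq
  exact ⟨h ∘ g, hh.comp hg, by rw [← Measure.map_map hh hg, hμg, hνh]⟩

lemma exists_measurable_map_eq (μ : Measure X) (ν : Measure Y) [IsFiniteMeasure μ]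
    [NullSingletonClass μ] (h : μ univ = ν univ) :
    ∃ f : X → Y, Measurable f ∧ μ.map f = ν := by
  by_cases hμ : μ univ = 0
  · refine ⟨fun _ => Classical.arbitrary Y, measurable_const, ?_⟩
    rw [Measure.measure_univ_eq_zero.1 hμ,
      Measure.measure_univ_eq_zero.1 (h ▸ hμ : ν univ = 0), Measure.map_zero]
  have hc : (μ univ)⁻¹ * μ univ = 1 := ENNReal.inv_mul_cancel hμ (measure_ne_top μ _)
  have hc' : μ univ * (μ univ)⁻¹ = 1 := ENNReal.mul_inv_cancel hμ (measure_ne_top μ _)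
  have : IsProbabilityMeasure ((μ univ)⁻¹ • μ) := ⟨by simpa using hc⟩
  have : IsProbabilityMeasure ((μ univ)⁻¹ • ν) := ⟨by simpa [← h] using hc⟩
  have : NullSingletonClass ((μ univ)⁻¹ • μ) := ⟨fun x => by simp⟩
  obtain ⟨f, hf, hμf⟩ := exists_measurable_map_eq_of_isProbabilityMeasure
    ((μ univ)⁻¹ • μ) ((μ univ)⁻¹ • ν)
  refine ⟨f, hf, ?_⟩
  rw [Measure.map_smul] at hμf
  calc μ.map f = μ univ • (μ univ)⁻¹ • μ.map f := by rw [smul_smul, hc', one_smul]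
    _ = ν := by rw [hμf, smul_smul, hc', one_smul]

end StandardBorel

section Gluing

variable {α β ι : Type*} [MeasurableSpace α] [MeasurableSpace β] [MeasurableSpace ι]
  [Countable ι] [MeasurableSingletonClass ι]

lemma sum_restrict_preimage_singleton (ρ : Measure α) {idx : α → ι} (hidx : Measurable idx) :
    Measure.sum (fun i => ρ.restrict (idx ⁻¹' {i})) = ρ := by
  rw [← Measure.restrict_iUnion (fun i j hij => (disjoint_singleton.2 hij).preimage idx)
    fun i => hidx (measurableSet_singleton i), ← preimage_iUnion, iUnion_singleton_eq_range,
    range_id', preimage_univ, Measure.restrict_univ]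

lemma map_prodMk_eq_sum (ρ : Measure α) {idx : α → ι} (hidx : Measurable idx) {g : α → β}
    (hg : Measurable g) : ρ.map (fun x => (idx x, g x)) =
      Measure.sum fun i => ((ρ.restrict (idx ⁻¹' {i})).map g).map (Prod.mk i) := by
  conv_lhs => rw [← sum_restrict_preimage_singleton ρ hidx]
  rw [Measure.map_sum (hidx.prodMk hg).aemeasurable]
  refine congrArg Measure.sum (funext fun i => ?_)
  rw [Measure.map_map measurable_prodMk_left hg]
  refine Measure.map_congr ?_
  filter_upwards [ae_restrict_mem (hidx (measurableSet_singleton i))] with x hx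
  simp only [Function.comp_apply, show idx x = i from hx]

variable [StandardBorelSpace α] [StandardBorelSpace β] [Nonempty β]

theorem exists_measurable_map_prodMk_eq (μ : Measure α) [IsFiniteMeasure μ]
    [NullSingletonClass μ] {γ : Measure (α × β)} (hγ : γ.map Prod.fst = μ) {idx : α → ι}
    (hidx : Measurable idx) : ∃ T : α → β, Measurable T ∧
      μ.map (fun x => (idx x, T x)) = γ.map (fun p => (idx p.1, p.2)) := by
  have hB i : MeasurableSet (idx ⁻¹' {i}) := hidx (measurableSet_singleton i)
  have hmass i : μ.restrict (idx ⁻¹' {i}) univ =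
      (γ.restrict (Prod.fst ⁻¹' (idx ⁻¹' {i}))).map Prod.snd univ := by
    rw [Measure.map_apply measurable_snd MeasurableSet.univ, preimage_univ,
      Measure.restrict_apply_univ, Measure.restrict_apply_univ, ← hγ,
      Measure.map_apply measurable_fst (hB i)]
  choose f hf hμf using fun i => exists_measurable_map_eq _ _ (hmass i)
  have hT : Measurable fun x => f (idx x) x :=
    (measurable_from_prod_countable_left (f := fun p : α × ι => f p.2 p.1) hf).comp
      (measurable_id.prodMk hidx)
  refine ⟨fun x => f (idx x) x, hT, ?_⟩
  rw [map_prodMk_eq_sum μ hidx hT,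
    map_prodMk_eq_sum γ (idx := fun p => idx p.1) (hidx.comp measurable_fst) measurable_snd]
  refine congrArg Measure.sum (funext fun i => congrArg (Measure.map (Prod.mk i)) ?_)
  refine (Measure.map_congr ?_).trans (hμf i)
  filter_upwards [ae_restrict_mem (hB i)] with x hx
  simp only [show idx x = i from hx]

end Gluing

lemma sq_dist_le_sq_dist_add {X : Type*} [PseudoMetricSpace X] {x y z : X} {D δ : ℝ}
    (hyx : dist y x ≤ D) (hyz : dist y z ≤ D) (hxz : dist x z ≤ δ) :
    dist y x ^ 2 ≤ dist y z ^ 2 + 2 * D * δ := by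
  have htri : dist y x ≤ dist y z + δ :=
    (dist_comm z x ▸ dist_triangle y z x).trans (by linarith)
  have hyx0 := dist_nonneg (x := y) (y := x)
  have hyz0 := dist_nonneg (x := y) (y := z)
  have hδ := dist_nonneg.trans hxz
  rcases le_total (dist y x) (dist y z) with h | h
  · nlinarith
  · nlinarith [mul_le_mul_of_nonneg_right (sub_le_iff_le_add'.2 htri) (add_nonneg hyx0 hyz0),
      mul_le_mul_of_nonneg_left (add_le_add hyx hyz) hδ]

section Metric

variable {X : Type*} [MetricSpace X] [MeasurableSpace X] [BorelSpace X]

lemma exists_measurable_nat_index_dist_lt [TopologicalSpace.SeparableSpace X] [Nonempty X]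
    {δ : ℝ} (hδ : 0 < δ) :
    ∃ (c : ℕ → X) (idx : X → ℕ), Measurable idx ∧ ∀ x, dist x (c (idx x)) < δ := by
  classical
  obtain ⟨c, hc⟩ := TopologicalSpace.exists_dense_seq X
  have hex x : ∃ n, dist x (c n) < δ := hc.exists_dist_lt x hδ
  exact ⟨c, fun x => Nat.find (hex x),
    measurable_find hex fun n => measurableSet_lt (measurable_id.dist measurable_const)
      measurable_const,
    fun x => Nat.find_spec (hex x)⟩

lemma integrable_dist_sq [BoundedSpace X] [SecondCountableTopology X] {Z : Type*}
    [MeasurableSpace Z] {ρ : Measure Z} [IsFiniteMeasure ρ] {f g : Z → X} (hf : Measurable f)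
    (hg : Measurable g) : Integrable (fun z => dist (f z) (g z) ^ 2) ρ := by
  refine Integrable.of_bound ((hf.dist hg).pow_const 2).aestronglyMeasurable
    (Metric.diam (univ : Set X) ^ 2) (ae_of_all _ fun z => ?_)
  rw [Real.norm_of_nonneg (by positivity)]
  exact pow_le_pow_left₀ dist_nonneg
    (Metric.dist_le_diam_of_mem BoundedSpace.bounded_univ (mem_univ _) (mem_univ _)) 2

lemma integral_dist_sq_le_of_map_prodMk_eq [BoundedSpace X] [SecondCountableTopology X]
    {μ : Measure X} [IsProbabilityMeasure μ] {γ : Measure (X × X)} [IsProbabilityMeasure γ]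
    {T : X → X} (hT : Measurable T) {idx : X → ℕ} (hidx : Measurable idx) {c : ℕ → X}
    {δ : ℝ} (hc : ∀ x, dist x (c (idx x)) ≤ δ)
    (hlaw : μ.map (fun x => (idx x, T x)) = γ.map (fun p => (idx p.1, p.2))) :
    ∫ x, dist (T x) x ^ 2 ∂μ ≤
      ∫ p, dist p.1 p.2 ^ 2 ∂γ + 4 * Metric.diam (univ : Set X) * δ := by
  set D := Metric.diam (univ : Set X)
  have hD x y : dist x y ≤ D :=
    Metric.dist_le_diam_of_mem BoundedSpace.bounded_univ (mem_univ x) (mem_univ y)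
  have hcidx : Measurable fun x => c (idx x) := measurable_from_nat.comp hidx
  have hφ : Measurable fun q : ℕ × X => dist q.2 (c q.1) ^ 2 :=
    (measurable_snd.dist (measurable_from_nat.comp measurable_fst)).pow_const 2
  have hpair : Measurable fun p : X × X => (idx p.1, p.2) :=
    (hidx.comp measurable_fst).prodMk measurable_snd
  have hcenter :
      ∫ x, dist (T x) (c (idx x)) ^ 2 ∂μ = ∫ p, dist p.2 (c (idx p.1)) ^ 2 ∂γ := by
    rw [← integral_map (hidx.prodMk hT).aemeasurable hφ.aestronglyMeasurable, hlaw,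
      integral_map hpair.aemeasurable hφ.aestronglyMeasurable]
  have hint_μ : Integrable (fun x => dist (T x) (c (idx x)) ^ 2) μ :=
    integrable_dist_sq hT hcidx
  have hint_γ : Integrable (fun p : X × X => dist p.1 p.2 ^ 2) γ :=
    integrable_dist_sq measurable_fst measurable_snd
  have hbound_μ x : dist (T x) x ^ 2 ≤ dist (T x) (c (idx x)) ^ 2 + 2 * D * δ :=
    sq_dist_le_sq_dist_add (hD _ _) (hD _ _) (hc x)
  have hbound_γ (p : X × X) : dist p.2 (c (idx p.1)) ^ 2 ≤ dist p.1 p.2 ^ 2 + 2 * D * δ :=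
    dist_comm p.2 p.1 ▸ sq_dist_le_sq_dist_add (hD _ _) (hD _ _) (dist_comm p.1 _ ▸ hc p.1)
  calc ∫ x, dist (T x) x ^ 2 ∂μ
      ≤ ∫ x, (dist (T x) (c (idx x)) ^ 2 + 2 * D * δ) ∂μ :=
        integral_mono (integrable_dist_sq hT measurable_id) (hint_μ.add (integrable_const _))
          hbound_μ
    _ = ∫ p, dist p.2 (c (idx p.1)) ^ 2 ∂γ + 2 * D * δ := by
        rw [integral_add hint_μ (integrable_const _), hcenter, integral_const]
        simp
    _ ≤ ∫ p, (dist p.1 p.2 ^ 2 + 2 * D * δ) ∂γ + 2 * D * δ :=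
        add_le_add_left (integral_mono
          (integrable_dist_sq measurable_snd (hcidx.comp measurable_fst))
          (hint_γ.add (integrable_const _)) hbound_γ) _
    _ = ∫ p, dist p.1 p.2 ^ 2 ∂γ + 4 * D * δ := by
        rw [integral_add hint_γ (integrable_const _), integral_const]
        simp only [probReal_univ, one_smul]
        ring

theorem exists_measurable_map_integral_dist_sq_le [CompactSpace X] (μ : Measure X)
    [IsProbabilityMeasure μ] [NullSingletonClass μ] {γ : Measure (X × X)}
    (hγ : γ.map Prod.fst = μ) {ε : ℝ} (hε : 0 < ε) :
    ∃ T : X → X, Measurable T ∧ μ.map T = γ.map Prod.snd ∧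
      ∫ x, dist (T x) x ^ 2 ∂μ ≤ ∫ p, dist p.1 p.2 ^ 2 ∂γ + ε := by
  have := nonempty_of_isProbabilityMeasure μ
  have : IsProbabilityMeasure γ :=
    ⟨by rw [← preimage_univ, ← Measure.map_apply measurable_fst .univ, hγ, measure_univ]⟩
  set D := Metric.diam (univ : Set X)
  have hD0 : 0 ≤ D := Metric.diam_nonneg
  obtain ⟨δ, hδ, hDδ⟩ : ∃ δ > 0, 4 * D * δ ≤ ε :=
    ⟨ε / (4 * D + 1), by positivity,
      by rw [mul_div_assoc', div_le_iff₀ (by positivity)]; nlinarith⟩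
  obtain ⟨c, idx, hidx, hc⟩ := exists_measurable_nat_index_dist_lt (X := X) hδ
  obtain ⟨T, hT, hlaw⟩ := exists_measurable_map_prodMk_eq μ hγ hidx
  have hpair : Measurable fun p : X × X => (idx p.1, p.2) :=
    (hidx.comp measurable_fst).prodMk measurable_snd
  refine ⟨T, hT, ?_, ?_⟩
  · have := congrArg (Measure.map Prod.snd) hlaw
    rwa [Measure.map_map measurable_snd (hidx.prodMk hT),
      Measure.map_map measurable_snd hpair] at this
  · linarith [integral_dist_sq_le_of_map_prodMk_eq hT hidx (fun x => (hc x).le) hlaw]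

end Metric

section Wasserstein

variable {d : ℕ} {Ω : Set (EuclideanSpace ℝ (Fin d))}

lemma transportCost_eq_integral_dist (T : Ω → Ω) (μ : Measure Ω) :
    transportCost T μ = ∫ x, dist (T x) x ^ 2 ∂μ := by
  simp only [transportCost, Subtype.dist_eq, dist_eq_norm]

lemma W2sq_map_le_transportCost (μ : Measure Ω) [IsProbabilityMeasure μ] {T : Ω → Ω}
    (hT : Measurable T) : W2sq μ (μ.map T) ≤ transportCost T μ := by
  have hgraph : Measurable fun x => (x, T x) := measurable_id.prodMk hT
  refine csInf_le ⟨0, ?_⟩ ⟨μ.map fun x => (x, T x),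
    Measure.isProbabilityMeasure_map hgraph.aemeasurable, ?_, ?_, ?_⟩
  · rintro _ ⟨γ, -, -, -, rfl⟩
    exact integral_nonneg fun p => by positivity
  · rw [Measure.map_map measurable_fst hgraph]
    exact Measure.map_id
  · rw [Measure.map_map measurable_snd hgraph]
    rfl
  · rw [integral_map hgraph.aemeasurable (by fun_prop)]
    simp_rw [transportCost, norm_sub_rev]

lemma le_W2sq_of_forall_le_transportCost (hΩ : IsCompact Ω) (μ ν : Measure Ω)
    [IsProbabilityMeasure μ] [NullSingletonClass μ] [IsProbabilityMeasure ν] {c : ℝ}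
    (h : ∀ T : Ω → Ω, Measurable T → μ.map T = ν → c ≤ transportCost T μ) :
    c ≤ W2sq μ ν := by
  have := isCompact_iff_compactSpace.1 hΩ
  refine le_csInf ⟨_, μ.prod ν, inferInstance, by simp, by simp, rfl⟩ ?_
  rintro _ ⟨γ, -, hγμ, hγν, rfl⟩
  refine le_of_forall_pos_le_add fun ε hε => ?_
  obtain ⟨T, hT, hTν, hcost⟩ := exists_measurable_map_integral_dist_sq_le μ hγμ hε
  calc c ≤ transportCost T μ := h T hT (hTν.trans hγν)
    _ ≤ _ := by simpa only [transportCost_eq_integral_dist, Subtype.dist_eq, dist_eq_norm]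
      using hcost

theorem transportCost_eq_W2sq_of_forall_le (hΩ : IsCompact Ω) (μ : Measure Ω)
    [IsProbabilityMeasure μ] [NullSingletonClass μ] {T : Ω → Ω} (hT : Measurable T)
    (hmin : ∀ T' : Ω → Ω, Measurable T' → μ.map T' = μ.map T →
      transportCost T μ ≤ transportCost T' μ) :
    transportCost T μ = W2sq μ (μ.map T) := by
  have := Measure.isProbabilityMeasure_map (μ := μ) hT.aemeasurable
  exact le_antisymm (le_W2sq_of_forall_le_transportCost hΩ μ _ hmin)
    (W2sq_map_le_transportCost μ hT)

end Wasserstein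

theorem stmt5_general {d : ℕ} (hd : 1 ≤ d) (Ω : Set (EuclideanSpace ℝ (Fin d)))
    (hcomp : IsCompact Ω)
    (𝓕 : Type*)
    (L : 𝓕 → Ω → ℝ)
    (μ : Measure Ω) (hμ : IsProbabilityMeasure μ)
    (hac : μ.map (Subtype.val : Ω → EuclideanSpace ℝ (Fin d)) ≪ volume)
    (τ : ℝ) (hτ : 0 < τ) :
    ∀ (T : Ω → Ω) (F : 𝓕), Measurable T →
      (∀ (T' : Ω → Ω), Measurable T' → ∀ F' : 𝓕,
        (∫ x, L F x ∂(μ.map T)) + (1 / (2 * τ)) * transportCost T μ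
          ≤ (∫ x, L F' x ∂(μ.map T')) + (1 / (2 * τ)) * transportCost T' μ) →
      transportCost T μ = W2sq μ (μ.map T) := by
  intro T F hT hmin
  have : Nonempty (Fin d) := ⟨⟨0, hd⟩⟩
  have : NullSingletonClass μ := .of_map_absolutelyContinuous measurable_subtype_coe hac
  refine transportCost_eq_W2sq_of_forall_le hcomp μ hT fun T' hT' hpush => ?_
  have h := hmin T' hT' F
  rw [hpush] at h
  exact le_of_mul_le_mul_left (by linarith) (by positivity : 0 < 1 / (2 * τ))

/-- Proposition 2 (second part): every minimizer of the regularized problem has a transport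
component that is an optimal transport map from `μ` to its pushforward. -/
theorem stmt5 {d : ℕ} (hd : 1 ≤ d) (Ω : Set (EuclideanSpace ℝ (Fin d)))
    (hconv : Convex ℝ Ω) (hcomp : IsCompact Ω)
    (hfront : volume (frontier Ω) = 0)
    (𝓕 : Type*) [MetricSpace 𝓕] [CompactSpace 𝓕] [Nonempty 𝓕]
    (L : 𝓕 → Ω → ℝ) (hLcont : Continuous fun p : 𝓕 × Ω => L p.1 p.2)
    (hLnonneg : ∀ F x, 0 ≤ L F x)
    (μ : Measure Ω) (hμ : IsProbabilityMeasure μ)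
    (hac : μ.map (Subtype.val : Ω → EuclideanSpace ℝ (Fin d)) ≪ volume)
    (hμfront : μ.map (Subtype.val : Ω → EuclideanSpace ℝ (Fin d)) (frontier Ω) = 0)
    (τ : ℝ) (hτ : 0 < τ) :
    ∀ (T : Ω → Ω) (F : 𝓕), Measurable T →
      (∀ (T' : Ω → Ω), Measurable T' → ∀ F' : 𝓕,
        (∫ x, L F x ∂(μ.map T)) + (1 / (2 * τ)) * transportCost T μ
          ≤ (∫ x, L F' x ∂(μ.map T')) + (1 / (2 * τ)) * transportCost T' μ) →
      transportCost T μ = W2sq μ (μ.map T) :=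
  stmt5_general hd Ω hcomp 𝓕 L μ hμ hac τ hτ
end
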